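/- Let the problem have Property (P). Then the problem suffers from the curse of dimensionality if and only if h_k = 1 for all k. -/

import Mathlib

open Filter Real Set

/-- Information complexity: the number of multi-indices `(j₁,…,j_d) ∈ ℕ^d`
(here 0-indexed, so `Λ k j` stands for `λ(k+1, j+1)`) whose eigenvalue product exceeds `ε²`. -/
noncomputable def infoCount (Λ : ℕ → ℕ → ℝ) (d : ℕ) (ε : ℝ) : ℕ :=
  Nat.card {j : Fin d → ℕ | ε ^ 2 < ∏ k : Fin d, Λ k.val (j k)}

/-- Strong polynomial tractability. -/
def IsSPT (Λ : ℕ → ℕ → ℝ) : Prop :=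
  ∃ C p : ℝ, 0 ≤ C ∧ 0 ≤ p ∧ ∀ d : ℕ, 1 ≤ d → ∀ ε : ℝ, ε ∈ Set.Ioo (0 : ℝ) 1 →
    (infoCount Λ d ε : ℝ) ≤ C * ε ^ (-p)

/-- The exponent `p*` of strong polynomial tractability. -/
noncomputable def sptExponent (Λ : ℕ → ℕ → ℝ) : ℝ :=
  sInf {p : ℝ | 0 ≤ p ∧ ∃ C : ℝ, 0 ≤ C ∧ ∀ d : ℕ, 1 ≤ d → ∀ ε : ℝ, ε ∈ Set.Ioo (0 : ℝ) 1 →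
    (infoCount Λ d ε : ℝ) ≤ C * ε ^ (-p)}

/-- Polynomial tractability. -/
def IsPT (Λ : ℕ → ℕ → ℝ) : Prop :=
  ∃ C p q : ℝ, 0 ≤ C ∧ 0 ≤ p ∧ 0 ≤ q ∧ ∀ d : ℕ, 1 ≤ d → ∀ ε : ℝ, ε ∈ Set.Ioo (0 : ℝ) 1 →
    (infoCount Λ d ε : ℝ) ≤ C * (d : ℝ) ^ q * ε ^ (-p)

/-- Quasi-polynomial tractability. -/
def IsQPT (Λ : ℕ → ℕ → ℝ) : Prop :=
  ∃ C t : ℝ, 0 < C ∧ 0 < t ∧ ∀ d : ℕ, 1 ≤ d → ∀ ε : ℝ, ε ∈ Set.Ioo (0 : ℝ) 1 →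
    (infoCount Λ d ε : ℝ) ≤ C * Real.exp (t * (1 + Real.log d) * (1 + Real.log ε⁻¹))

/-- The exponent `t*` of quasi-polynomial tractability. -/
noncomputable def qptExponent (Λ : ℕ → ℕ → ℝ) : ℝ :=
  sInf {t : ℝ | 0 < t ∧ ∃ C : ℝ, 0 < C ∧ ∀ d : ℕ, 1 ≤ d → ∀ ε : ℝ, ε ∈ Set.Ioo (0 : ℝ) 1 →
    (infoCount Λ d ε : ℝ) ≤ C * Real.exp (t * (1 + Real.log d) * (1 + Real.log ε⁻¹))}

/-- The filter describing `ε⁻¹ + d → ∞` over pairs `(ε, d)` with `ε ∈ (0,1)` and `d ≥ 1`. -/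
noncomputable def wtFilter : Filter (ℝ × ℕ) :=
  (Filter.comap (fun p : ℝ × ℕ => p.1⁻¹ + (p.2 : ℝ)) Filter.atTop) ⊓
    Filter.principal {p : ℝ × ℕ | p.1 ∈ Set.Ioo (0 : ℝ) 1 ∧ 1 ≤ p.2}

/-- `(s,t)`-weak tractability: `ln n(ε,d) / (ε^{-s} + d^t) → 0` as `ε⁻¹ + d → ∞`. -/
def IsWT (Λ : ℕ → ℕ → ℝ) (s t : ℝ) : Prop :=
  Filter.Tendsto
    (fun p : ℝ × ℕ => Real.log (infoCount Λ p.2 p.1) / (p.1 ^ (-s) + (p.2 : ℝ) ^ t))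
    wtFilter (nhds 0)

/-- Uniform weak tractability. -/
def IsUWT (Λ : ℕ → ℕ → ℝ) : Prop := ∀ s t : ℝ, 0 < s → 0 < t → IsWT Λ s t

/-- The problem suffers from the curse of dimensionality. -/
def SuffersCurse (Λ : ℕ → ℕ → ℝ) : Prop :=
  ∃ C ε₀ α : ℝ, 0 < C ∧ 0 < ε₀ ∧ 0 < α ∧ ∀ ε : ℝ, 0 < ε → ε ≤ ε₀ →
    {d : ℕ | C * (1 + α) ^ d ≤ (infoCount Λ d ε : ℝ)}.Infinite

/-- Condition (3) of Property (P) for a given `τ > 0`: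
`H(k,τ) = ∑_{j≥2} (λ(k,j)/λ(k,2))^τ` is finite for each `k` and
`sup_k H(k,τ) = H(1,τ)` (equivalently `H(k,τ) ≤ H(1,τ)` for all `k`). -/
def Cond3 (Λ : ℕ → ℕ → ℝ) (τ : ℝ) : Prop :=
  0 < τ ∧ (∀ k, Summable fun j : ℕ => (Λ k (j + 1) / Λ k 1) ^ τ) ∧
    ∀ k, (∑' j : ℕ, (Λ k (j + 1) / Λ k 1) ^ τ) ≤ ∑' j : ℕ, (Λ 0 (j + 1) / Λ 0 1) ^ τ

/-- `τ₀`: the infimum of all `τ` satisfying Condition (3). -/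
noncomputable def tau0 (Λ : ℕ → ℕ → ℝ) : ℝ := sInf {τ : ℝ | Cond3 Λ τ}

/-- Property (P): each sequence `λ(k,·)` is nonincreasing and nonnegative with `λ(k,1) = 1`
and `λ(k,2) > 0`, `h_k = λ(k,2)` is nonincreasing, and Condition (3) holds for some `τ > 0`. -/
structure PropertyP (Λ : ℕ → ℕ → ℝ) : Prop where
  nonneg : ∀ k j, 0 ≤ Λ k j
  anti : ∀ k, Antitone (Λ k)
  first : ∀ k, Λ k 0 = 1
  second_pos : ∀ k, 0 < Λ k 1
  h_anti : Antitone fun k => Λ k 1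
  cond3 : ∃ τ : ℝ, Cond3 Λ τ

/-!
If `h_K < 1` for some `K`, a Chebyshev-type count gives
`ε^{2T} n(ε,d) ≤ ∏_{k ≤ d} ∑_j λ(k,j)^T ≤ ∏_{k ≤ d} (1 + h_k^T H(1,τ))` for every `T ≥ τ`.
Since `h_k ≤ h_K` for `k ≥ K`, choosing `T` large makes all but the first `K` factors as close
to `1` as we like, so `n(ε,d)` grows slower than every exponential. Conversely, if all `h_k = 1`
then the `2^d` indices in `{1,2}^d` all have eigenvalue product `1`.
-/

open Finset

/-- The quantity `H(k+1,τ)` of the paper. -/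
noncomputable def tailSum (Λ : ℕ → ℕ → ℝ) (k : ℕ) (τ : ℝ) : ℝ :=
  ∑' j : ℕ, (Λ k (j + 1) / Λ k 1) ^ τ

lemma card_mul_le_prod_sum {ι κ : Type*} [Fintype ι] [DecidableEq ι] {s : ι → Finset κ}
    {g : ι → κ → ℝ} (hg : ∀ i a, 0 ≤ g i a) {t : Finset (ι → κ)} (ht : t ⊆ Fintype.piFinset s)
    {c : ℝ} (hc : ∀ x ∈ t, c ≤ ∏ i, g i (x i)) :
    t.card * c ≤ ∏ i, ∑ a ∈ s i, g i a :=
  calc t.card * c = ∑ _x ∈ t, c := by rw [sum_const, nsmul_eq_mul]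
    _ ≤ ∑ x ∈ t, ∏ i, g i (x i) := sum_le_sum hc
    _ ≤ ∑ x ∈ Fintype.piFinset s, ∏ i, g i (x i) :=
      sum_le_sum_of_subset_of_nonneg ht fun x _ _ => prod_nonneg fun i _ => hg i (x i)
    _ = ∏ i, ∑ a ∈ s i, g i a := (prod_univ_sum s g).symm

lemma prod_range_le_pow_mul_pow {f : ℕ → ℝ} {a b : ℝ} {K : ℕ} (hf : ∀ k, 0 ≤ f k)
    (ha : ∀ k, f k ≤ a) (hb : ∀ k, K ≤ k → f k ≤ b) (ha1 : 1 ≤ a) (hb1 : 1 ≤ b) (d : ℕ) :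
    ∏ k ∈ range d, f k ≤ a ^ K * b ^ d := by
  rw [← prod_filter_mul_prod_filter_not (range d) (· < K)]
  have hhead : ∏ k ∈ range d with k < K, f k ≤ a ^ K :=
    calc ∏ k ∈ range d with k < K, f k ≤ ∏ k ∈ range d with k < K, a :=
          prod_le_prod (fun k _ => hf k) fun k _ => ha k
      _ ≤ a ^ K := by
        rw [prod_const]
        refine pow_le_pow_right₀ ha1 ((Finset.card_le_card fun k hk => ?_).trans_eq (card_range K))
        exact mem_range.2 (mem_filter.1 hk).2
  have htail : ∏ k ∈ range d with ¬k < K, f k ≤ b ^ d :=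
    calc ∏ k ∈ range d with ¬k < K, f k ≤ ∏ k ∈ range d with ¬k < K, b :=
          prod_le_prod (fun k _ => hf k) fun k hk => hb k (not_lt.1 (mem_filter.1 hk).2)
      _ ≤ b ^ d := by
        rw [prod_const]
        exact pow_le_pow_right₀ hb1 ((card_filter_le _ _).trans_eq (card_range d))
  exact mul_le_mul hhead htail (prod_nonneg fun k _ => hf k) (by positivity)

lemma finite_setOf_mul_pow_le_mul_pow {C A x y : ℝ} (hC : 0 < C) (hy : 0 < y) (hyx : y < x) :
    {d : ℕ | C * x ^ d ≤ A * y ^ d}.Finite := by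
  have hgrow : Tendsto (fun d : ℕ => C * (x / y) ^ d) atTop atTop :=
    (tendsto_pow_atTop_atTop_of_one_lt ((one_lt_div hy).2 hyx)).const_mul_atTop hC
  have hev : ∀ᶠ d in cofinite, ¬C * x ^ d ≤ A * y ^ d :=
    Nat.cofinite_eq_atTop ▸ (hgrow.eventually_gt_atTop A).mono fun d hd => by
      rw [div_pow, ← mul_div_assoc, lt_div_iff₀ (pow_pos hy d)] at hd
      exact hd.not_ge
  simpa only [not_not] using eventually_cofinite.1 hev

lemma not_suffersCurse_of_forall_le_mul_pow {Λ : ℕ → ℕ → ℝ}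
    (h : ∀ β > 1, ∀ ε > 0, ∃ A : ℝ, ∀ d, (infoCount Λ d ε : ℝ) ≤ A * β ^ d) :
    ¬SuffersCurse Λ := by
  rintro ⟨C, ε₀, α, hC, hε₀, hα, hcurse⟩
  obtain ⟨A, hA⟩ := h (1 + α / 2) (by linarith) ε₀ hε₀
  exact hcurse ε₀ hε₀ le_rfl <|
    (finite_setOf_mul_pow_le_mul_pow hC (by linarith) (by linarith)).subset
      fun d hd => le_trans hd (hA d)

namespace PropertyP

variable {Λ : ℕ → ℕ → ℝ} (hP : PropertyP Λ)
include hP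

lemma le_one (k j : ℕ) : Λ k j ≤ 1 :=
  hP.first k ▸ hP.anti k (Nat.zero_le j)

lemma tailSum_nonneg (k : ℕ) (τ : ℝ) : 0 ≤ tailSum Λ k τ :=
  tsum_nonneg fun _ => rpow_nonneg (div_nonneg (hP.nonneg _ _) (hP.second_pos k).le) _

lemma rpow_succ_le {τ T : ℝ} (hτ : 0 ≤ τ) (hτT : τ ≤ T) (k j : ℕ) :
    Λ k (j + 1) ^ T ≤ Λ k 1 ^ T * (Λ k (j + 1) / Λ k 1) ^ τ := by
  have hk := hP.second_pos k
  have hr0 : 0 ≤ Λ k (j + 1) / Λ k 1 := div_nonneg (hP.nonneg _ _) hk.le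
  have hr1 : Λ k (j + 1) / Λ k 1 ≤ 1 := (div_le_one hk).2 (hP.anti k (Nat.le_add_left 1 j))
  calc Λ k (j + 1) ^ T = Λ k 1 ^ T * (Λ k (j + 1) / Λ k 1) ^ T := by
        rw [← mul_rpow hk.le hr0, mul_div_cancel₀ _ hk.ne']
    _ ≤ Λ k 1 ^ T * (Λ k (j + 1) / Λ k 1) ^ τ :=
        mul_le_mul_of_nonneg_left (rpow_le_rpow_of_exponent_ge' hr0 hr1 hτ hτT) (by positivity)

lemma summable_rpow {τ T : ℝ} (hτ : Cond3 Λ τ) (hτT : τ ≤ T) (k : ℕ) :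
    Summable fun i => Λ k i ^ T := by
  refine (summable_nat_add_iff 1).1 ?_
  exact ((hτ.2.1 k).mul_left (Λ k 1 ^ T)).of_nonneg_of_le
    (fun _ => rpow_nonneg (hP.nonneg _ _) T) (hP.rpow_succ_le hτ.1.le hτT k)

lemma tsum_rpow_le {τ T : ℝ} (hτ : Cond3 Λ τ) (hτT : τ ≤ T) (k : ℕ) :
    ∑' i, Λ k i ^ T ≤ 1 + Λ k 1 ^ T * tailSum Λ 0 τ := by
  have hsucc : Summable fun j => Λ k 1 ^ T * (Λ k (j + 1) / Λ k 1) ^ τ :=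
    (hτ.2.1 k).mul_left _
  rw [(hP.summable_rpow hτ hτT k).tsum_eq_zero_add, hP.first, one_rpow]
  gcongr
  calc ∑' j, Λ k (j + 1) ^ T ≤ ∑' j, Λ k 1 ^ T * (Λ k (j + 1) / Λ k 1) ^ τ :=
        ((summable_nat_add_iff 1).2 (hP.summable_rpow hτ hτT k)).tsum_le_tsum
          (hP.rpow_succ_le hτ.1.le hτT k) hsucc
    _ = Λ k 1 ^ T * tailSum Λ k τ := tsum_mul_left
    _ ≤ Λ k 1 ^ T * tailSum Λ 0 τ :=
        mul_le_mul_of_nonneg_left (hτ.2.2 k) (rpow_nonneg (hP.second_pos k).le T)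

lemma finite_setOf_lt (k : ℕ) {c : ℝ} (hc : 0 < c) : {i | c < Λ k i}.Finite := by
  obtain ⟨τ, hτ⟩ := hP.cond3
  have hsmall := (tendsto_order.1 (hP.summable_rpow hτ le_rfl k).tendsto_cofinite_zero).2
    (c ^ τ) (rpow_pos_of_pos hc τ)
  refine (eventually_cofinite.1 hsmall).subset fun i hi => ?_
  exact not_lt.2 (rpow_le_rpow hc.le (le_of_lt hi) hτ.1.le)

lemma lt_of_lt_prod {d : ℕ} {j : Fin d → ℕ} {c : ℝ} (hc : c < ∏ k : Fin d, Λ k (j k))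
    (k : Fin d) : c < Λ k (j k) :=
  hc.trans_le <| calc ∏ k : Fin d, Λ k (j k) = Λ k (j k) * ∏ i ∈ univ.erase k, Λ i (j i) :=
        (mul_prod_erase _ _ (mem_univ k)).symm
    _ ≤ Λ k (j k) :=
        mul_le_of_le_one_right (hP.nonneg _ _)
          (prod_le_one (fun _ _ => hP.nonneg _ _) fun _ _ => hP.le_one _ _)

lemma finite_infoSet (d : ℕ) {ε : ℝ} (hε : 0 < ε) :
    {j : Fin d → ℕ | ε ^ 2 < ∏ k : Fin d, Λ k (j k)}.Finite :=
  (Set.Finite.pi fun k : Fin d => hP.finite_setOf_lt k (pow_pos hε 2)).subset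
    fun _ hj k _ => hP.lt_of_lt_prod hj k

lemma rpow_mul_infoCount_le {τ T : ℝ} (hτ : Cond3 Λ τ) (hτT : τ ≤ T) (d : ℕ) {ε : ℝ}
    (hε : 0 < ε) :
    (ε ^ 2) ^ T * infoCount Λ d ε ≤ ∏ k : Fin d, (1 + Λ k 1 ^ T * tailSum Λ 0 τ) := by
  have hT : 0 < T := hτ.1.trans_le hτT
  have hfin := hP.finite_infoSet d hε
  set box : Fin d → Finset ℕ := fun k => (hP.finite_setOf_lt k (pow_pos hε 2)).toFinset
  have hcard : infoCount Λ d ε = hfin.toFinset.card := by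
    rw [infoCount, Nat.card_coe_set_eq, Set.ncard_eq_toFinset_card _ hfin]
  have hcount := card_mul_le_prod_sum (s := box) (g := fun k i => Λ k i ^ T)
    (fun _ _ => rpow_nonneg (hP.nonneg _ _) T) (t := hfin.toFinset) (c := (ε ^ 2) ^ T)
    (fun j hj => by simpa [box] using fun k => hP.lt_of_lt_prod (hfin.mem_toFinset.1 hj) k)
    fun j hj => by
      rw [finsetProd_rpow _ _ fun _ _ => hP.nonneg _ _]
      exact rpow_le_rpow (by positivity) (hfin.mem_toFinset.1 hj).le hT.le
  rw [hcard, mul_comm]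
  refine hcount.trans (prod_le_prod (fun k _ => sum_nonneg fun i _ => ?_) fun k _ => ?_)
  · exact rpow_nonneg (hP.nonneg _ _) T
  · exact ((hP.summable_rpow hτ hτT k).sum_le_tsum _ fun i _ =>
      rpow_nonneg (hP.nonneg _ _) T).trans (hP.tsum_rpow_le hτ hτT k)

lemma infoCount_le_mul_pow {K : ℕ} (hK : Λ K 1 < 1) {β : ℝ} (hβ : 1 < β) {ε : ℝ} (hε : 0 < ε) :
    ∃ A : ℝ, ∀ d, (infoCount Λ d ε : ℝ) ≤ A * β ^ d := by
  obtain ⟨τ, hτ⟩ := hP.cond3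
  set H := tailSum Λ 0 τ
  have hH := hP.tailSum_nonneg 0 τ
  have hKpos := hP.second_pos K
  have hdecay : Tendsto (fun T : ℝ => Λ K 1 ^ T * H) atTop (nhds (0 * H)) :=
    (tendsto_rpow_atTop_of_base_lt_one _ (by linarith) hK).mul_const H
  obtain ⟨T, hsmall, hτT⟩ :=
    ((hdecay.eventually_lt_const (by linarith : 0 * H < β - 1)).and (eventually_ge_atTop τ)).exists
  have hT : 0 < T := hτ.1.trans_le hτT
  have hfactor_le (k : ℕ) : 1 + Λ k 1 ^ T * H ≤ 1 + H := by
    have := rpow_le_one (hP.second_pos k).le (hP.le_one k 1) hT.le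
    nlinarith
  have hfactor_le_β (k : ℕ) (hk : K ≤ k) : 1 + Λ k 1 ^ T * H ≤ β := by
    have := rpow_le_rpow (hP.second_pos k).le (hP.h_anti hk) hT.le
    nlinarith
  refine ⟨(1 + H) ^ K / (ε ^ 2) ^ T, fun d => ?_⟩
  have hprod := prod_range_le_pow_mul_pow
    (fun k => add_nonneg zero_le_one (mul_nonneg (rpow_nonneg (hP.second_pos k).le T) hH))
    hfactor_le hfactor_le_β (by linarith) hβ.le d
  rw [← Fin.prod_univ_eq_prod_range (fun k => 1 + Λ k 1 ^ T * H)] at hprod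
  rw [div_mul_eq_mul_div, le_div_iff₀ (by positivity), mul_comm]
  exact (hP.rpow_mul_infoCount_le hτ hτT d hε).trans hprod

lemma two_pow_le_infoCount (h1 : ∀ k, Λ k 1 = 1) (d : ℕ) {ε : ℝ} (hε : 0 < ε) (hε1 : ε < 1) :
    2 ^ d ≤ infoCount Λ d ε := by
  have hsub : (Fintype.piFinset fun _ : Fin d => range 2 : Set (Fin d → ℕ)) ⊆
      {j | ε ^ 2 < ∏ k : Fin d, Λ k (j k)} := fun j hj => by
    have hj1 (k : Fin d) : Λ k (j k) = 1 := by
      have : j k < 2 := mem_range.1 (Fintype.mem_piFinset.1 hj k)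
      interval_cases hjk : j k
      exacts [hP.first k, h1 k]
    simp only [Set.mem_ofPred_eq, hj1, prod_const_one]
    nlinarith
  calc 2 ^ d = (Fintype.piFinset fun _ : Fin d => range 2).card := by simp
    _ ≤ infoCount Λ d ε := by
      rw [← Set.ncard_coe_finset, infoCount, Nat.card_coe_set_eq]
      exact Set.ncard_le_ncard hsub (hP.finite_infoSet d hε)

end PropertyP

/-- Under Property (P), the problem suffers from the curse of dimensionality iff
`h_k = 1` for all `k`. -/
theorem curse_iff_h_eq_one (Λ : ℕ → ℕ → ℝ) (hP : PropertyP Λ) :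
    SuffersCurse Λ ↔ ∀ k : ℕ, Λ k 1 = 1 := by
  constructor
  · intro hcurse
    by_contra! hne
    obtain ⟨K, hK⟩ := hne
    exact not_suffersCurse_of_forall_le_mul_pow
      (fun β hβ ε hε => hP.infoCount_le_mul_pow ((hP.le_one K 1).lt_of_ne hK) hβ hε) hcurse
  · intro h1
    refine ⟨1, 1 / 2, 1, one_pos, one_half_pos, one_pos, fun ε hε hε₀ => ?_⟩
    refine Set.infinite_univ.mono fun d _ => ?_
    have := hP.two_pow_le_infoCount h1 d hε (by linarith)
    norm_num
    exact_mod_cast this
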